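/- arXiv:1901.06619 — 3 statements merged into one kernel-verified Lean document; each statement's English description precedes it below -/
import Mathlib

section
/- Let A be a real k × n matrix with A Aᵀ = I_k, and for j ∈ {1,…,n} let α_j² := Σ_{i=1}^k a_{ij}² be the squared Euclidean norm of the j-th column of A. Then for every diagonal positive definite matrix Λ = Diag(λ_1,…,λ_n), log det(A Λ Aᵀ) ≥ Σ_{j=1}^n α_j² log λ_j. -/
open MeasureTheory ProbabilityTheory Module
open scoped ENNReal NNReal

noncomputable section

namespace BLEPI

/-- Differential entropy of a measure on a space equipped with a canonical volume:
`h(μ) = -∫ log (dμ/dvol) dμ`, which equals `-∫ f log f dvol` when `μ` has density `f`. -/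
def dEnt {E : Type*} [MeasureSpace E] (μ : Measure E) : ℝ :=
  -∫ x, Real.log ((μ.rnDeriv volume x).toReal) ∂μ

/-- Condition (*) : `μ` has a density `f` w.r.t. volume with `∫ f log (1 + f) < ∞`. -/
def CondStar {E : Type*} [MeasureSpace E] (μ : Measure E) : Prop :=
  μ ≪ (volume : Measure E) ∧
    Integrable (fun x => ((μ.rnDeriv volume x).toReal) *
      Real.log (1 + (μ.rnDeriv volume x).toReal)) (volume : Measure E)

/-- Convolution of two measures. -/
def mconv {E : Type*} [MeasurableSpace E] [Add E] (μ ν : Measure E) : Measure E :=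
  (μ.prod ν).map (fun p => p.1 + p.2)

/-- The centered Gaussian product measure on `ℝ^d` whose coordinates are
independent centered Gaussians of variance `v`. -/
def gaussPi (v : ℝ≥0) (d : ℕ) : Measure (EuclideanSpace ℝ (Fin d)) :=
  (Measure.pi fun _ : Fin d => gaussianReal 0 v).map
    (MeasurableEquiv.toLp 2 (Fin d → ℝ))

/-- The standard Gaussian measure `N(0, I_n)` on `Fin n → ℝ`. -/
def stdGauss (n : ℕ) : Measure (Fin n → ℝ) := Measure.pi fun _ : Fin n => gaussianReal 0 1

/-- `μ` is the centered Gaussian measure on `ℝ^d` with covariance matrix `S`. -/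
def IsCenteredGaussian {d : ℕ} (μ : Measure (EuclideanSpace ℝ (Fin d)))
    (S : Matrix (Fin d) (Fin d) ℝ) : Prop :=
  ∃ L : Matrix (Fin d) (Fin d) ℝ, L * L.transpose = S ∧
    μ = (gaussPi 1 d).map
      (fun x => (EuclideanSpace.equiv (Fin d) ℝ).symm (L.mulVec (EuclideanSpace.equiv (Fin d) ℝ x)))

/-- The data `(A, c, r, d)` of a BL-EPI datum (validity conditions are stated separately,
so that induced data with possibly zero-dimensional blocks are also representable). -/
structure Datum where
  m : ℕ
  k : ℕ
  r : Fin k → ℕ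
  nt : Fin m → ℕ
  A : ∀ j : Fin m, ((i : Fin k) → EuclideanSpace ℝ (Fin (r i))) →ₗ[ℝ] EuclideanSpace ℝ (Fin (nt j))
  c : Fin m → ℝ
  d : Fin k → ℝ

/-- The ambient space `ℝ^n = ℝ^{r_1} × ⋯ × ℝ^{r_k}`. -/
abbrev Datum.E (D : Datum) : Type := (i : Fin D.k) → EuclideanSpace ℝ (Fin (D.r i))

/-- The two-copy ambient space `ℝ^{2r_1} × ⋯ × ℝ^{2r_k}`. -/
abbrev Datum.E2 (D : Datum) : Type :=
  (i : Fin D.k) → EuclideanSpace ℝ (Fin (D.r i)) × EuclideanSpace ℝ (Fin (D.r i))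

/-- Validity of a BL-EPI datum: `m, k, r_i` positive, the `A_j` surjective, `c, d` nonneg. -/
def Datum.Valid (D : Datum) : Prop :=
  0 < D.m ∧ 0 < D.k ∧ (∀ i, 0 < D.r i) ∧ (∀ j, Function.Surjective (D.A j)) ∧
    (∀ j, 0 ≤ D.c j) ∧ (∀ i, 0 ≤ D.d i)

/-- Membership of a law `ν` on `ℝ^n` in the class `P(r)`: a probability measure whose
blocks are mutually independent, each block having a density satisfying (*), with zero
mean and finite second moments. -/
def MemP (D : Datum) (ν : Measure D.E) : Prop :=
  IsProbabilityMeasure ν ∧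
  ν = Measure.pi (fun i => ν.map (fun x => x i)) ∧
  (∀ i, CondStar (ν.map (fun x => x i))) ∧
  (∀ i (a : Fin (D.r i)), ∫ x, x i a ∂ν = 0) ∧
  (∀ i (a : Fin (D.r i)), Integrable (fun x => (x i a) ^ 2) ν)

/-- Membership in `P_g(r)` : member of `P(r)` with Gaussian blocks. -/
def MemPg (D : Datum) (ν : Measure D.E) : Prop :=
  MemP D ν ∧ ∀ i, ∃ S : Matrix (Fin (D.r i)) (Fin (D.r i)) ℝ,
    IsCenteredGaussian (ν.map (fun x => x i)) S

/-- Membership of a joint law on `ℝ^{2r_1} × ⋯ × ℝ^{2r_k}` in `P(2r)` : the pairs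
`(X_{i1}, X_{i2})` are mutually independent, each with a density satisfying (*),
zero mean and finite second moments. -/
def MemP2 (D : Datum) (ν : Measure D.E2) : Prop :=
  IsProbabilityMeasure ν ∧
  ν = Measure.pi (fun i => ν.map (fun x => x i)) ∧
  (∀ i, CondStar (ν.map (fun x => x i))) ∧
  (∀ i (a : Fin (D.r i)), ∫ x, (x i).1 a ∂ν = 0) ∧
  (∀ i (a : Fin (D.r i)), ∫ x, (x i).2 a ∂ν = 0) ∧
  (∀ i (a : Fin (D.r i)), Integrable (fun x => ((x i).1 a) ^ 2) ν) ∧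
  (∀ i (a : Fin (D.r i)), Integrable (fun x => ((x i).2 a) ^ 2) ν)

/-- The objective `Σ d_i h(X_i) - Σ c_j h(A_j X)` as a function of the law of `X`. -/
def obj (D : Datum) (ν : Measure D.E) : ℝ :=
  ∑ i, D.d i * dEnt (ν.map (fun x => x i)) - ∑ j, D.c j * dEnt (ν.map (D.A j))

/-- `M = sup_{X ∈ P(r)} (Σ d_i h(X_i) - Σ c_j h(A_j X))`, as an extended real. -/
def Mval (D : Datum) : EReal :=
  sSup {y : EReal | ∃ ν : Measure D.E, MemP D ν ∧ y = ((obj D ν : ℝ) : EReal)}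

/-- `M_g`, the same supremum restricted to Gaussian members. -/
def Mgval (D : Datum) : EReal :=
  sSup {y : EReal | ∃ ν : Measure D.E, MemPg D ν ∧ y = ((obj D ν : ℝ) : EReal)}

/-- Condition (i) of the finiteness theorem: for every `r`-product form subspace
`V = V_1 × ⋯ × V_k`, `Σ d_i dim V_i ≤ Σ c_j dim (A_j V)`. -/
def Cond1 (D : Datum) : Prop :=
  ∀ V : ∀ i : Fin D.k, Submodule ℝ (EuclideanSpace ℝ (Fin (D.r i))),
    ∑ i, D.d i * (finrank ℝ (V i) : ℝ) ≤
      ∑ j, D.c j * (finrank ℝ ((Submodule.pi Set.univ V).map (D.A j)) : ℝ)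

/-- Condition (ii) of the finiteness theorem: `Σ d_i r_i = Σ c_j n_j`. -/
def Cond2 (D : Datum) : Prop :=
  ∑ i, D.d i * (D.r i : ℝ) = ∑ j, D.c j * (D.nt j : ℝ)

/-- The law of `√δ W = (√δ W_1, …, √δ W_k)` on the ambient space. -/
def gaussE (D : Datum) (δ : ℝ) : Measure D.E := Measure.pi fun i => gaussPi δ.toNNReal (D.r i)

/-- `s_{ε,δ}` as a function of the law `ν` of `X`:
`Σ d_i h(X_i + √δ W_i) - Σ c_j h(A_j (X + √δ W) + √ε Z_j)`. -/
def sFun (D : Datum) (ε δ : ℝ) (ν : Measure D.E) : ℝ :=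
  ∑ i, D.d i * dEnt (mconv (ν.map (fun x => x i)) (gaussPi δ.toNNReal (D.r i))) -
    ∑ j, D.c j * dEnt (mconv (ν.map (D.A j))
      (mconv ((gaussE D δ).map (D.A j)) (gaussPi ε.toNNReal (D.nt j))))

/-- The law of the noise `(A_j (√δ W_1) + √ε Z_{j1}, A_j (√δ W_2) + √ε Z_{j2})`. -/
def noise2 (D : Datum) (ε δ : ℝ) (j : Fin D.m) :
    Measure (EuclideanSpace ℝ (Fin (D.nt j)) × EuclideanSpace ℝ (Fin (D.nt j))) :=
  (mconv ((gaussE D δ).map (D.A j)) (gaussPi ε.toNNReal (D.nt j))).prod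
    (mconv ((gaussE D δ).map (D.A j)) (gaussPi ε.toNNReal (D.nt j)))

/-- The two-copy version of `s_{ε,δ}` as a function of the joint law `ν` of `(X_1, X_2)`. -/
def sFun2 (D : Datum) (ε δ : ℝ) (ν : Measure D.E2) : ℝ :=
  ∑ i, D.d i * dEnt (mconv (ν.map (fun x => x i))
      ((gaussPi δ.toNNReal (D.r i)).prod (gaussPi δ.toNNReal (D.r i)))) -
    ∑ j, D.c j * dEnt (mconv
      (ν.map (fun x => (D.A j (fun i => (x i).1), D.A j (fun i => (x i).2))))
      (noise2 D ε δ j))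

/-- `s_{ε,δ}(X ∣ U) = Σ_u P(U = u) s_{ε,δ}(X ∣ U = u)` for a finite-valued `U`. -/
def sCond (D : Datum) (ε δ : ℝ) {Ω ι : Type*} [MeasurableSpace Ω] [Fintype ι]
    (P : Measure Ω) (X : Ω → D.E) (U : Ω → ι) : ℝ :=
  ∑ u : ι, (P (U ⁻¹' {u})).toReal * sFun D ε δ ((P[|U ⁻¹' {u}]).map X)

/-- the two-copy version of `s_{ε,δ}(X₁, X₂ ∣ U)`. -/
def sCond2 (D : Datum) (ε δ : ℝ) {Ω ι : Type*} [MeasurableSpace Ω] [Fintype ι]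
    (P : Measure Ω) (X : Ω → D.E2) (U : Ω → ι) : ℝ :=
  ∑ u : ι, (P (U ⁻¹' {u})).toReal * sFun2 D ε δ ((P[|U ⁻¹' {u}]).map X)

/-- `S_{ε,δ}(X)`: the supremum of `s_{ε,δ}(X ∣ U)` over finite-valued auxiliaries `U`
whose conditional laws lie in `P(r)`; expressed distributionally via finite mixtures. -/
def SVal (D : Datum) (ε δ : ℝ) (ν : Measure D.E) : EReal :=
  sSup {y : EReal | ∃ (t : ℕ) (p : Fin t → ℝ≥0) (νs : Fin t → Measure D.E),
    (∑ u, p u) = 1 ∧ (∀ u, MemP D (νs u)) ∧ (∑ u, ((p u : ℝ≥0∞) • νs u)) = ν ∧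
    y = ((∑ u, (p u : ℝ) * sFun D ε δ (νs u) : ℝ) : EReal)}

/-- The two-copy version `S_{ε,δ}(X₁, X₂)`. -/
def SVal2 (D : Datum) (ε δ : ℝ) (ν : Measure D.E2) : EReal :=
  sSup {y : EReal | ∃ (t : ℕ) (p : Fin t → ℝ≥0) (νs : Fin t → Measure D.E2),
    (∑ u, p u) = 1 ∧ (∀ u, MemP2 D (νs u)) ∧ (∑ u, ((p u : ℝ≥0∞) • νs u)) = ν ∧
    y = ((∑ u, (p u : ℝ) * sFun2 D ε δ (νs u) : ℝ) : EReal)}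

/-- The law of `X₁` under a two-copy law. -/
def marg1 (D : Datum) (ν : Measure D.E2) : Measure D.E := ν.map (fun x i => (x i).1)

/-- The law of `X₂` under a two-copy law. -/
def marg2 (D : Datum) (ν : Measure D.E2) : Measure D.E := ν.map (fun x i => (x i).2)

/-- The joint law of `(X₁, X₂)` when `X₁ ∼ μ₁` and `X₂ ∼ μ₂` are independent. -/
def coupleIndep (D : Datum) (μ₁ μ₂ : Measure D.E) : Measure D.E2 :=
  (μ₁.prod μ₂).map (fun p i => (p.1 i, p.2 i))

/-- `E[X Xᵀ] ⪯ Σ` where `Σ = Diag(Σ_1, …, Σ_k)`, expressed via quadratic forms. -/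
def covLE (D : Datum) (ν : Measure D.E)
    (S : ∀ i, Matrix (Fin (D.r i)) (Fin (D.r i)) ℝ) : Prop :=
  ∀ v : D.E, ∫ x, (∑ i, ∑ a, v i a * x i a) ^ 2 ∂ν ≤
    ∑ i, ∑ a, ∑ b, v i a * S i a b * v i b

/-- `V(Σ) = sup { S_{ε,δ}(X) : X ∈ P(r), E[X Xᵀ] ⪯ Σ }`. -/
def VVal (D : Datum) (ε δ : ℝ) (S : ∀ i, Matrix (Fin (D.r i)) (Fin (D.r i)) ℝ) : EReal :=
  sSup {y : EReal | ∃ ν : Measure D.E, MemP D ν ∧ covLE D ν S ∧ y = SVal D ε δ ν}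

/-- The `r`-product form subspace `U_1 × ⋯ × U_k` of the ambient space. -/
def prodSub (D : Datum) (U : ∀ i, Submodule ℝ (EuclideanSpace ℝ (Fin (D.r i)))) :
    Submodule ℝ D.E := Submodule.pi Set.univ U

/-- `A_j U`, the image of the product subspace under `A_j`. -/
def AjU (D : Datum) (U : ∀ i, Submodule ℝ (EuclideanSpace ℝ (Fin (D.r i)))) (j : Fin D.m) :
    Submodule ℝ (EuclideanSpace ℝ (Fin (D.nt j))) := (prodSub D U).map (D.A j)

/-- Embedding of coordinates of `U` into the ambient space via linear isometries `φ_i`. -/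
def embedMap (D : Datum) (U : ∀ i, Submodule ℝ (EuclideanSpace ℝ (Fin (D.r i))))
    (φ : ∀ i, EuclideanSpace ℝ (Fin (finrank ℝ (U i))) ≃ₗᵢ[ℝ] U i) :
    ((i : Fin D.k) → EuclideanSpace ℝ (Fin (finrank ℝ (U i)))) →ₗ[ℝ] D.E :=
  LinearMap.pi (fun i => (U i).subtype ∘ₗ ((φ i).toLinearEquiv : _ ≃ₗ[ℝ] _).toLinearMap ∘ₗ
    LinearMap.proj i)

lemma embedMap_mem (D : Datum) (U : ∀ i, Submodule ℝ (EuclideanSpace ℝ (Fin (D.r i))))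
    (φ : ∀ i, EuclideanSpace ℝ (Fin (finrank ℝ (U i))) ≃ₗᵢ[ℝ] U i)
    (v : (i : Fin D.k) → EuclideanSpace ℝ (Fin (finrank ℝ (U i)))) :
    embedMap D U φ v ∈ prodSub D U :=
  Submodule.mem_pi.mpr (fun i _ => ((φ i) (v i)).2)

/-- The induced BL-EPI datum on `U = U_1 × ⋯ × U_k`, with maps `Ã_j : U → A_j U` given by
restriction of `A_j`, expressed in coordinates via linear isometries `φ_i`, `ψ_j`. -/
def inducedU (D : Datum) (U : ∀ i, Submodule ℝ (EuclideanSpace ℝ (Fin (D.r i))))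
    (φ : ∀ i, EuclideanSpace ℝ (Fin (finrank ℝ (U i))) ≃ₗᵢ[ℝ] U i)
    (ψ : ∀ j, EuclideanSpace ℝ (Fin (finrank ℝ (AjU D U j))) ≃ₗᵢ[ℝ] AjU D U j) : Datum where
  m := D.m
  k := D.k
  r := fun i => finrank ℝ (U i)
  nt := fun j => finrank ℝ (AjU D U j)
  A := fun j => ((ψ j).symm.toLinearEquiv : _ ≃ₗ[ℝ] _).toLinearMap ∘ₗ
    LinearMap.codRestrict (AjU D U j) (D.A j ∘ₗ embedMap D U φ)
      (fun v => Submodule.mem_map_of_mem (embedMap_mem D U φ v))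
  c := D.c
  d := D.d

/-- Embedding of coordinates of `U^⊥ = U_1^⊥ × ⋯ × U_k^⊥` into the ambient space. -/
def embedMapPerp (D : Datum) (U : ∀ i, Submodule ℝ (EuclideanSpace ℝ (Fin (D.r i))))
    (φ : ∀ i, EuclideanSpace ℝ (Fin (finrank ℝ ((U i)ᗮ))) ≃ₗᵢ[ℝ] (U i)ᗮ) :
    ((i : Fin D.k) → EuclideanSpace ℝ (Fin (finrank ℝ ((U i)ᗮ)))) →ₗ[ℝ] D.E :=
  LinearMap.pi (fun i => ((U i)ᗮ).subtype ∘ₗ ((φ i).toLinearEquiv : _ ≃ₗ[ℝ] _).toLinearMap ∘ₗ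
    LinearMap.proj i)

/-- The induced BL-EPI datum on `U^⊥`, with maps `Ã̃_j x = Π_{(A_j U)^⊥} (A_j x)`
expressed in coordinates via linear isometries `φ'_i`, `ψ'_j`. -/
def inducedUperp (D : Datum) (U : ∀ i, Submodule ℝ (EuclideanSpace ℝ (Fin (D.r i))))
    (φ' : ∀ i, EuclideanSpace ℝ (Fin (finrank ℝ ((U i)ᗮ))) ≃ₗᵢ[ℝ] (U i)ᗮ)
    (ψ' : ∀ j, EuclideanSpace ℝ (Fin (finrank ℝ ((AjU D U j)ᗮ))) ≃ₗᵢ[ℝ] (AjU D U j)ᗮ) :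
    Datum where
  m := D.m
  k := D.k
  r := fun i => finrank ℝ ((U i)ᗮ)
  nt := fun j => finrank ℝ ((AjU D U j)ᗮ)
  A := fun j => ((ψ' j).symm.toLinearEquiv : _ ≃ₗ[ℝ] _).toLinearMap ∘ₗ
    ((Submodule.orthogonalProjectionOnto ((AjU D U j)ᗮ)).toLinearMap ∘ₗ (D.A j ∘ₗ embedMapPerp D U φ'))
  c := D.c
  d := D.d

end BLEPI

/-! If the orthogonal matrix `V` diagonalises `M = A Λ Aᵀ`, then `B = Vᵀ A` still has orthonormal
rows and the same column norms, while `B Λ Bᵀ` is diagonal with entries `μ_i = Σ_j B_ij² λ_j`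
and `∏ μ_i = det M`. Each row `(B_ij²)_j` is a probability vector, so
concavity of `log` gives `Σ_j B_ij² log λ_j ≤ log μ_i`; summing over `i` gives the bound. -/

namespace Real

theorem sum_mul_log_le_log_sum_mul {ι : Type*} (s : Finset ι) {w x : ι → ℝ}
    (hw : ∀ i ∈ s, 0 ≤ w i) (hw₁ : ∑ i ∈ s, w i = 1) (hx : ∀ i ∈ s, 0 < x i) :
    ∑ i ∈ s, w i * log (x i) ≤ log (∑ i ∈ s, w i * x i) :=
  strictConcaveOn_log_Ioi.concaveOn.le_map_sum hw hw₁ hx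

end Real

namespace Matrix

variable {l m n R : Type*}

section CommSemiring

variable [CommSemiring R]

theorem mul_diagonal_mul_transpose_apply_self [Fintype n] [DecidableEq n] (A : Matrix m n R)
    (d : n → R) (i : m) :
    (A * diagonal d * Aᵀ) i i = ∑ j, A i j ^ 2 * d j := by
  simp only [mul_apply, diagonal_apply, mul_ite, mul_zero, Finset.sum_ite_eq',
    Finset.mem_univ, if_true, transpose_apply]
  exact Finset.sum_congr rfl fun j _ => by ring

theorem mul_transpose_apply_self [Fintype n] [DecidableEq n] (A : Matrix m n R) (i : m) :
    (A * Aᵀ) i i = ∑ j, A i j ^ 2 := by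
  simpa using mul_diagonal_mul_transpose_apply_self A 1 i

theorem transpose_mul_apply_self [Fintype m] [DecidableEq m] (A : Matrix m n R) (j : n) :
    (Aᵀ * A) j j = ∑ i, A i j ^ 2 := by
  simpa using mul_transpose_apply_self Aᵀ j

theorem sum_sq_mul_apply_of_transpose_mul_self_eq_one [Fintype l] [Fintype m] [DecidableEq l]
    [DecidableEq m] {U : Matrix l m R} (hU : Uᵀ * U = 1) (A : Matrix m n R) (j : n) :
    ∑ i, (U * A) i j ^ 2 = ∑ i, A i j ^ 2 := by
  rw [← transpose_mul_apply_self, ← transpose_mul_apply_self, transpose_mul, Matrix.mul_assoc,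
    ← Matrix.mul_assoc Uᵀ, hU, Matrix.one_mul]

end CommSemiring

theorem IsHermitian.exists_orthogonal_transpose_mul_mul_eq_diagonal [Fintype m] [DecidableEq m]
    {M : Matrix m m ℝ} (hM : M.IsHermitian) :
    ∃ V : Matrix m m ℝ, Vᵀ * V = 1 ∧ Vᵀ * M * V = diagonal hM.eigenvalues := by
  refine ⟨hM.eigenvectorUnitary, ?_, ?_⟩
  · exact mem_unitaryGroup_iff'.mp hM.eigenvectorUnitary.2
  · simpa [star_eq_conjTranspose] using hM.conjStarAlgAut_star_eigenvectorUnitary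

theorem sum_sq_mul_log_le_log_prod_mul_diagonal_mul_transpose_apply_self [Fintype m] [Fintype n]
    [DecidableEq m] [DecidableEq n] {B : Matrix m n ℝ} (hB : B * Bᵀ = 1) {lam : n → ℝ}
    (hlam : ∀ j, 0 < lam j) :
    ∑ j, (∑ i, B i j ^ 2) * Real.log (lam j) ≤
      Real.log (∏ i, (B * diagonal lam * Bᵀ) i i) := by
  have hrow (i : m) : ∑ j, B i j ^ 2 = 1 := by
    rw [← mul_transpose_apply_self B i, hB, one_apply_eq]
  have hpos (i : m) : 0 < (B * diagonal lam * Bᵀ) i i := by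
    rw [mul_diagonal_mul_transpose_apply_self]
    simpa using (convex_Ioi (0 : ℝ)).sum_mem (fun j _ => sq_nonneg (B i j)) (hrow i)
      (fun j _ => hlam j)
  rw [Real.log_prod fun i _ => (hpos i).ne']
  calc ∑ j, (∑ i, B i j ^ 2) * Real.log (lam j)
      = ∑ i, ∑ j, B i j ^ 2 * Real.log (lam j) := by
        simp_rw [Finset.sum_mul]; exact Finset.sum_comm
    _ ≤ ∑ i, Real.log ((B * diagonal lam * Bᵀ) i i) := Finset.sum_le_sum fun i _ => by
        rw [mul_diagonal_mul_transpose_apply_self]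
        exact Real.sum_mul_log_le_log_sum_mul _ (fun j _ => sq_nonneg _) (hrow i)
          fun j _ => hlam j

end Matrix

namespace BLEPI

open Matrix in
/-- For a `k × n` matrix `A` with orthonormal rows (`A Aᵀ = I`) and a positive diagonal
matrix `Λ = Diag(λ₁, …, λₙ)`, `log det (A Λ Aᵀ) ≥ Σ_j α_j² log λ_j`, where `α_j²` is the
squared norm of the `j`-th column of `A`. -/
theorem logdet_diagonal_lower_bound (k n : ℕ) (A : Matrix (Fin k) (Fin n) ℝ)
    (hA : A * A.transpose = 1) (lam : Fin n → ℝ) (hlam : ∀ j, 0 < lam j) :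
    ∑ j, (∑ i, (A i j) ^ 2) * Real.log (lam j) ≤
      Real.log (A * Matrix.diagonal lam * A.transpose).det := by
  have hM : (A * diagonal lam * Aᵀ).IsHermitian := by
    simpa using isHermitian_mul_mul_conjTranspose A (isHermitian_diagonal lam)
  obtain ⟨V, hV, hVM⟩ := hM.exists_orthogonal_transpose_mul_mul_eq_diagonal
  have hVt : Vᵀᵀ * Vᵀ = 1 := by rw [transpose_transpose, mul_eq_one_comm, hV]
  have hB : (Vᵀ * A) * (Vᵀ * A)ᵀ = 1 := by
    rw [transpose_mul, transpose_transpose, Matrix.mul_assoc, ← Matrix.mul_assoc A, hA,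
      Matrix.one_mul, hV]
  have hdet : (A * diagonal lam * Aᵀ).det = ∏ i, (Vᵀ * A * diagonal lam * (Vᵀ * A)ᵀ) i i := by
    have hconj : Vᵀ * A * diagonal lam * (Vᵀ * A)ᵀ = Vᵀ * (A * diagonal lam * Aᵀ) * V := by
      simp only [transpose_mul, transpose_transpose, Matrix.mul_assoc]
    rw [hconj, hVM, hM.det_eq_prod_eigenvalues]
    simp
  calc ∑ j, (∑ i, A i j ^ 2) * Real.log (lam j)
      = ∑ j, (∑ i, (Vᵀ * A) i j ^ 2) * Real.log (lam j) := by
        simp_rw [sum_sq_mul_apply_of_transpose_mul_self_eq_one hVt]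
    _ ≤ _ := sum_sq_mul_log_le_log_prod_mul_diagonal_mul_transpose_apply_self hB hlam
    _ = _ := by rw [hdet]

end BLEPI
end
end

section
/- (Rotation invariance) Let (A, c, r, d) be a BL-EPI datum, fix ε, δ > 0, and let (X_1, X_2, U) be random variables with (X_1, X_2) ∈ P(2r) and U finite-valued. Define X_+ := (X_1 + X_2)/√2 and X_− := (X_1 − X_2)/√2. Then s_{ε,δ}(X_1, X_2 | U) = s_{ε,δ}(X_+, X_− | U). -/
open MeasureTheory ProbabilityTheory Module
open scoped ENNReal NNReal

noncomputable section

namespace BLEPI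

/-
The map `rot (x, y) = ((x + y)/√2, (x − y)/√2)` is a linear involution, so its determinant is `±1`
and it preserves Lebesgue measure; hence it leaves the differential entropy of an absolutely
continuous law unchanged. Every entropy in `s_{ε,δ}` is that of a law of the form `μ ∗ (G ⊗ G)`,
where `μ` is a pushforward of the law of `(X₁, X₂)` by a map commuting with `rot`, and `G` is a
centered Gaussian built from real Gaussians by products, linear images and convolutions. Such a
`G ⊗ G` is `rot`-invariant: on characteristic functions this is the parallelogram identity for
the quadratic form in the exponent. Since `rot` is linear it commutes with convolution, so each
entropy for `(X₊, X₋)` is the entropy of the corresponding law for `(X₁, X₂)` pushed forward by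
`rot`.
-/

section Rotation

variable (E : Type*) [NormedAddCommGroup E] [NormedSpace ℝ E]

def rot : (E × E) →L[ℝ] E × E :=
  (√2)⁻¹ • ((ContinuousLinearMap.fst ℝ E E + .snd ℝ E E).prod (.fst ℝ E E - .snd ℝ E E))

variable {E}

lemma rot_apply (p : E × E) : rot E p = ((√2)⁻¹ • (p.1 + p.2), (√2)⁻¹ • (p.1 - p.2)) := rfl

lemma rot_rot (p : E × E) : rot E (rot E p) = p := by
  have h : (√2)⁻¹ * (√2)⁻¹ * (2 : ℝ) = 1 := by
    rw [← mul_inv, Real.mul_self_sqrt zero_le_two, inv_mul_cancel₀ two_ne_zero]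
  simp only [rot_apply, ← smul_add, ← smul_sub, smul_smul]
  ext
  · rw [show p.1 + p.2 + (p.1 - p.2) = (2 : ℝ) • p.1 by rw [two_smul]; abel, smul_smul, h, one_smul]
  · rw [show p.1 + p.2 - (p.1 - p.2) = (2 : ℝ) • p.2 by rw [two_smul]; abel, smul_smul, h, one_smul]

variable (E) in
def rotEquiv : (E × E) ≃L[ℝ] E × E := .equivOfInverse (rot E) (rot E) rot_rot rot_rot

lemma measurePreserving_rot [MeasureSpace E] [BorelSpace E] [FiniteDimensional ℝ E]
    [(volume : Measure E).IsAddHaarMeasure] :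
    MeasurePreserving (rot E) volume volume := by
  have : (volume : Measure (E × E)).IsAddHaarMeasure := by
    rw [Measure.volume_eq_prod]; infer_instance
  have hdet : LinearMap.det (rot E : (E × E) →ₗ[ℝ] E × E) ^ 2 = 1 := by
    rw [sq, ← LinearMap.det_comp, show (rot E : (E × E) →ₗ[ℝ] E × E) ∘ₗ rot E = .id from
      LinearMap.ext rot_rot, LinearMap.det_id]
  have hne : LinearMap.det (rot E : (E × E) →ₗ[ℝ] E × E) ≠ 0 := by
    rintro h; simp [h] at hdet
  refine ⟨(rot E).continuous.measurable, ?_⟩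
  have habs : |LinearMap.det (rot E : (E × E) →ₗ[ℝ] E × E)| = 1 :=
    (pow_eq_one_iff_of_nonneg (abs_nonneg _) two_ne_zero).1 (by rw [sq_abs, hdet])
  rw [← ContinuousLinearMap.coe_coe, Measure.map_linearMap_addHaar_eq_smul_addHaar _ hne,
    abs_inv, habs, inv_one, ENNReal.ofReal_one, one_smul]

end Rotation

lemma dEnt_map_of_measurePreserving {F : Type*} [MeasureSpace F]
    [SigmaFinite (volume : Measure F)] {f : F → F} (hf : MeasurableEmbedding f)
    (hvol : MeasurePreserving f volume volume) {μ : Measure F} [SigmaFinite μ]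
    (hμ : μ ≪ volume) : dEnt (μ.map f) = dEnt μ := by
  have key : (fun x => (μ.map f).rnDeriv volume (f x)) =ᵐ[μ] μ.rnDeriv volume :=
    hμ.ae_eq (by simpa only [hvol.map_eq] using hf.rnDeriv_map μ volume)
  rw [dEnt, dEnt, hf.integral_map]
  exact congrArg Neg.neg
    (integral_congr_ae (key.mono fun x hx => congrArg (fun t => Real.log t.toReal) hx))

lemma mconv_eq_conv {F : Type*} [MeasurableSpace F] [AddMonoid F] (μ ν : Measure F) :
    mconv μ ν = μ ∗ ν := rfl

section RotStable

open Complex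

variable {E F : Type*} [NormedAddCommGroup E] [NormedSpace ℝ E] [NormedAddCommGroup F]
  [NormedSpace ℝ F] [MeasurableSpace E] [MeasurableSpace F]

/-- The identity `(μ ⊗ μ).map rot = μ ⊗ μ`, read on characteristic functions; in this form it is
visibly stable under products, convolutions and linear images. -/
def RotStable (μ : Measure E) : Prop :=
  ∀ L₁ L₂ : StrongDual ℝ E,
    charFunDual μ ((√2)⁻¹ • (L₁ + L₂)) * charFunDual μ ((√2)⁻¹ • (L₁ - L₂)) =
      charFunDual μ L₁ * charFunDual μ L₂

lemma charFunDual_gaussianReal (v : ℝ≥0) (L : StrongDual ℝ ℝ) :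
    charFunDual (gaussianReal 0 v) L = cexp ((-(v * L 1 ^ 2 / 2) : ℝ) : ℂ) := by
  have hL : ⇑L = fun x => L 1 * x := funext fun x => by
    rw [mul_comm, ← smul_eq_mul, ← L.map_smul, smul_eq_mul, mul_one]
  rw [charFunDual_eq_charFun_map_one, hL, gaussianReal_map_const_mul, charFun_gaussianReal]
  push_cast
  ring_nf

lemma rotStable_gaussianReal (v : ℝ≥0) : RotStable (gaussianReal 0 v) := by
  intro L₁ L₂
  have key : -(v * ((√2)⁻¹ • (L₁ + L₂)) 1 ^ 2 / 2) + -(v * ((√2)⁻¹ • (L₁ - L₂)) 1 ^ 2 / 2)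
      = -(v * L₁ 1 ^ 2 / 2) + -(v * L₂ 1 ^ 2 / 2) := by
    simp only [smul_apply, add_apply, sub_apply, smul_eq_mul, mul_pow, inv_pow,
      Real.sq_sqrt zero_le_two]
    ring
  simp only [charFunDual_gaussianReal, ← Complex.exp_add, ← ofReal_add, key]

lemma RotStable.map [OpensMeasurableSpace E] [BorelSpace F] {μ : Measure E} (hμ : RotStable μ)
    (T : E →L[ℝ] F) : RotStable (μ.map T) := by
  intro L₁ L₂
  simp only [charFunDual_map, ContinuousLinearMap.smul_comp, ContinuousLinearMap.add_comp,
    ContinuousLinearMap.sub_comp]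
  exact hμ _ _

lemma RotStable.conv [BorelSpace E] [SecondCountableTopology E] {μ ν : Measure E}
    [IsFiniteMeasure μ] [IsFiniteMeasure ν] (hμ : RotStable μ) (hν : RotStable ν) :
    RotStable (μ ∗ ν) := by
  intro L₁ L₂
  simp only [charFunDual_conv]
  rw [mul_mul_mul_comm, hμ, hν, mul_mul_mul_comm]

lemma rotStable_pi {ι : Type*} [Fintype ι] [DecidableEq ι] {E : ι → Type*}
    [∀ i, NormedAddCommGroup (E i)] [∀ i, NormedSpace ℝ (E i)] [∀ i, MeasurableSpace (E i)]
    {μ : ∀ i, Measure (E i)} [∀ i, SigmaFinite (μ i)] (h : ∀ i, RotStable (μ i)) :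
    RotStable (Measure.pi μ) := by
  intro L₁ L₂
  simp only [charFunDual_pi, ← Finset.prod_mul_distrib, ContinuousLinearMap.smul_comp,
    ContinuousLinearMap.add_comp, ContinuousLinearMap.sub_comp]
  exact Finset.prod_congr rfl fun i _ => h i _ _

lemma RotStable.map_rot_prod_self [BorelSpace E] [FiniteDimensional ℝ E] {μ : Measure E}
    [IsFiniteMeasure μ] (hμ : RotStable μ) : (μ.prod μ).map (rot E) = μ.prod μ := by
  refine Measure.ext_of_charFunDual (funext fun L => ?_)
  have hinl : (L.comp (rot E)).comp (.inl ℝ E E) =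
      (√2)⁻¹ • (L.comp (.inl ℝ E E) + L.comp (.inr ℝ E E)) := by
    ext x
    have : rot E (x, 0) = (√2)⁻¹ • ((x, 0) + (0, x)) := by simp [rot_apply]
    simp only [ContinuousLinearMap.comp_apply, ContinuousLinearMap.inl_apply, this, map_smul,
      map_add, smul_apply, add_apply, ContinuousLinearMap.inr_apply]
  have hinr : (L.comp (rot E)).comp (.inr ℝ E E) =
      (√2)⁻¹ • (L.comp (.inl ℝ E E) - L.comp (.inr ℝ E E)) := by
    ext x
    have : rot E (0, x) = (√2)⁻¹ • ((x, 0) - (0, x)) := by simp [rot_apply]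
    simp only [ContinuousLinearMap.comp_apply, ContinuousLinearMap.inr_apply, this, map_smul,
      map_sub, smul_apply, sub_apply, ContinuousLinearMap.inl_apply]
  rw [charFunDual_map, charFunDual_prod, charFunDual_prod, hinl, hinr, hμ]

end RotStable

lemma absolutelyContinuous_pi {n : ℕ} {α : Fin n → Type*} [∀ i, MeasurableSpace (α i)]
    {μ ν : ∀ i, Measure (α i)} [∀ i, SigmaFinite (μ i)] [∀ i, SigmaFinite (ν i)]
    (h : ∀ i, μ i ≪ ν i) : Measure.pi μ ≪ Measure.pi ν := by
  induction n with
  | zero => rw [Measure.pi_of_empty μ, Measure.pi_of_empty ν]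
  | succ n ih =>
    rw [← ((measurePreserving_piFinSuccAbove μ 0).symm _).map_eq,
      ← ((measurePreserving_piFinSuccAbove ν 0).symm _).map_eq]
    exact (MeasurableEquiv.piFinSuccAbove α 0).symm.measurableEmbedding.absolutelyContinuous_map
      ((h 0).prod (ih fun i => h _))

lemma gaussPi_eq_map (v : ℝ≥0) (d : ℕ) :
    gaussPi v d = (Measure.pi fun _ : Fin d => gaussianReal 0 v).map
      ((EuclideanSpace.equiv (Fin d) ℝ).symm : (Fin d → ℝ) →L[ℝ] EuclideanSpace ℝ (Fin d)) :=
  rfl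

instance isProbabilityMeasure_gaussPi (v : ℝ≥0) (d : ℕ) : IsProbabilityMeasure (gaussPi v d) :=
  Measure.isProbabilityMeasure_map (MeasurableEquiv.toLp 2 _).measurable.aemeasurable

instance isProbabilityMeasure_gaussE (D : Datum) (δ : ℝ) : IsProbabilityMeasure (gaussE D δ) := by
  rw [gaussE]; infer_instance

lemma gaussPi_absolutelyContinuous {v : ℝ≥0} (hv : v ≠ 0) (d : ℕ) : gaussPi v d ≪ volume := by
  have hvol : (volume : Measure (EuclideanSpace ℝ (Fin d))) =
      (volume : Measure (Fin d → ℝ)).map (MeasurableEquiv.toLp 2 (Fin d → ℝ)) :=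
    (((EuclideanSpace.volume_preserving_symm_measurableEquiv_toLp (Fin d)).symm _).map_eq).symm
  rw [gaussPi, hvol]
  exact (MeasurableEquiv.toLp 2 _).measurableEmbedding.absolutelyContinuous_map
    (absolutelyContinuous_pi fun _ => gaussianReal_absolutelyContinuous 0 hv)

lemma rotStable_gaussPi (v : ℝ≥0) (d : ℕ) : RotStable (gaussPi v d) := by
  rw [gaussPi_eq_map]
  exact (rotStable_pi (μ := fun _ : Fin d => gaussianReal 0 v) fun _ =>
    rotStable_gaussianReal v).map _

lemma dEnt_conv_map_rot_prod_self {E : Type*} [NormedAddCommGroup E] [NormedSpace ℝ E]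
    [FiniteDimensional ℝ E] [MeasureSpace E] [BorelSpace E]
    [(volume : Measure E).IsAddHaarMeasure] (μ : Measure (E × E)) [IsFiniteMeasure μ]
    {G : Measure E} [IsFiniteMeasure G] (hG : RotStable G) (hGac : G ≪ volume) :
    dEnt (μ.map (rot E) ∗ G.prod G) = dEnt (μ ∗ G.prod G) := by
  have : (volume : Measure (E × E)).IsAddHaarMeasure := by
    rw [Measure.volume_eq_prod]; infer_instance
  have hac : G.prod G ≪ volume := by
    rw [Measure.volume_eq_prod]; exact hGac.prod hGac
  rw [← hG.map_rot_prod_self, ← Measure.map_conv_continuousLinearMap, hG.map_rot_prod_self]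
  exact dEnt_map_of_measurePreserving (rotEquiv E).toHomeomorph.measurableEmbedding
    measurePreserving_rot (Measure.conv_absolutelyContinuous hac)

def rotE2 (D : Datum) (x : D.E2) : D.E2 := fun i => rot _ (x i)

lemma continuous_rotE2 (D : Datum) : Continuous (rotE2 D) :=
  continuous_pi fun i => (rot _).continuous.comp (continuous_apply i)

lemma rotStable_gaussE (D : Datum) (δ : ℝ) : RotStable (gaussE D δ) :=
  rotStable_pi fun _ => rotStable_gaussPi _ _

lemma rotStable_gaussE_map_conv_gaussPi (D : Datum) (ε δ : ℝ) (j : Fin D.m) :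
    RotStable ((gaussE D δ).map (D.A j) ∗ gaussPi ε.toNNReal (D.nt j)) := by
  have h := ((rotStable_gaussE D δ).map (D.A j).toContinuousLinearMap).conv
    (rotStable_gaussPi ε.toNNReal (D.nt j))
  rwa [LinearMap.coe_toContinuousLinearMap'] at h

lemma sFun2_map_rotE2 (D : Datum) {ε δ : ℝ} (hε : 0 < ε) (hδ : 0 < δ) (ν : Measure D.E2)
    [IsFiniteMeasure ν] : sFun2 D ε δ (ν.map (rotE2 D)) = sFun2 D ε δ ν := by
  simp only [sFun2, noise2, mconv_eq_conv]
  congr 1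
  · refine Finset.sum_congr rfl fun i _ => congrArg _ ?_
    have hi : (ν.map (rotE2 D)).map (fun x => x i) = (ν.map (fun x => x i)).map (rot _) := by
      rw [Measure.map_map (by fun_prop) (continuous_rotE2 D).measurable,
        Measure.map_map (by fun_prop) (by fun_prop)]
      rfl
    rw [hi]
    exact dEnt_conv_map_rot_prod_self _ (rotStable_gaussPi _ _)
      (gaussPi_absolutelyContinuous (by simpa using hδ) _)
  · refine Finset.sum_congr rfl fun j _ => congrArg _ ?_
    have hA : Continuous (D.A j) := LinearMap.continuous_of_finiteDimensional _
    have hj : (ν.map (rotE2 D)).map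
          (fun x => (D.A j (fun i => (x i).1), D.A j (fun i => (x i).2))) =
        (ν.map (fun x => (D.A j (fun i => (x i).1), D.A j (fun i => (x i).2)))).map (rot _) := by
      rw [Measure.map_map (by fun_prop) (continuous_rotE2 D).measurable,
        Measure.map_map (by fun_prop) (by fun_prop)]
      congr 1
      funext x
      simp only [Function.comp_apply, rotE2, rot_apply]
      rw [← map_add, ← map_sub, ← map_smul, ← map_smul]
      rfl
    rw [hj]
    exact dEnt_conv_map_rot_prod_self _ (rotStable_gaussE_map_conv_gaussPi D ε δ j)
      (Measure.conv_absolutelyContinuous (gaussPi_absolutelyContinuous (by simpa using hε) _))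

theorem rotation_invariance_general (D : Datum) (ε δ : ℝ) (hε : 0 < ε) (hδ : 0 < δ)
    {Ω ι : Type} [MeasurableSpace Ω] [Fintype ι] (P : Measure Ω)
    (X : Ω → D.E2) (hX : Measurable X) (U : Ω → ι) :
    sCond2 D ε δ P X U =
      sCond2 D ε δ P (fun ω i =>
        ((Real.sqrt 2)⁻¹ • ((X ω i).1 + (X ω i).2),
          (Real.sqrt 2)⁻¹ • ((X ω i).1 - (X ω i).2))) U := by
  refine Finset.sum_congr rfl fun u _ => congrArg _ ?_
  rw [← sFun2_map_rotE2 D hε hδ, Measure.map_map (continuous_rotE2 D).measurable hX]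
  rfl

/-- **Rotation invariance** (Lemma 4.5): for `(X₁, X₂) ∈ P(2r)` and finite-valued `U`,
with `X_± := (X₁ ± X₂)/√2`, one has `s_{ε,δ}(X₁, X₂ ∣ U) = s_{ε,δ}(X₊, X₋ ∣ U)`. -/
theorem rotation_invariance (D : Datum) (hD : D.Valid) (ε δ : ℝ) (hε : 0 < ε) (hδ : 0 < δ)
    {Ω ι : Type} [MeasurableSpace Ω] [Fintype ι] [MeasurableSpace ι]
    [MeasurableSingletonClass ι] (P : Measure Ω) [IsProbabilityMeasure P]
    (X : Ω → D.E2) (hX : Measurable X) (U : Ω → ι) (hU : Measurable U)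
    (hmem : MemP2 D (P.map X)) :
    sCond2 D ε δ P X U =
      sCond2 D ε δ P (fun ω i =>
        ((Real.sqrt 2)⁻¹ • ((X ω i).1 + (X ω i).2),
          (Real.sqrt 2)⁻¹ • ((X ω i).1 - (X ω i).2))) U :=
  rotation_invariance_general D ε δ hε hδ P X hX U

end BLEPI
end
end

section
/- (Preservation of finiteness conditions under critical splitting) Let (A, c, r, d) be a BL-EPI datum satisfying: (i) Σ_i d_i dim(V_i) ≤ Σ_j c_j dim(A_j V) for every r-product form subspace V, and (ii) Σ_i d_i r_i = Σ_j c_j n_j. Let U = U_1 × ⋯ × U_k be an r-product form critical subspace, i.e. Σ_i d_i dim(U_i) = Σ_j c_j dim(A_j U). Then the induced BL-EPI data (Ã, c, r̃, d) on U (with Ã_j the restriction of A_j mapping onto A_j U) and (Ã̃, c, r̃^c, d) on U^⊥ (with Ã̃_j x = Π_{(A_j U)^⊥} A_j x) also satisfy the corresponding conditions (i) and (ii). -/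
open MeasureTheory ProbabilityTheory Module
open scoped ENNReal NNReal

noncomputable section

/-! Splitting along a critical `U` makes condition (i) additive: for `V ⊆ U^⊥` in product form,
`U ⊕ V` is again in product form, its dimension splits blockwise, and
`dim A_j(U ⊕ V) = dim A_j U + dim Π_{(A_j U)^⊥} A_j V`. Applying (i) to `U ⊕ V` and subtracting
the critical equality for `U` gives (i) on `U^⊥`; on `U` itself (i) is a special case of (i)
for the ambient datum, and the conditions (ii) are the critical equality and its complement. -/

namespace Submodule

theorem finrank_map_of_injective {K V W : Type*} [Field K] [AddCommGroup V] [Module K V]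
    [AddCommGroup W] [Module K W] {f : V →ₗ[K] W} (hf : Function.Injective f)
    (p : Submodule K V) : finrank K (p.map f) = finrank K p :=
  (equivMapOfInjective f hf p).finrank_eq.symm

theorem finrank_map_codRestrict {K V W : Type*} [Field K] [AddCommGroup V] [Module K V]
    [AddCommGroup W] [Module K W] (p : Submodule K W) (f : V →ₗ[K] W) (h : ∀ x, f x ∈ p)
    (q : Submodule K V) : finrank K (q.map (f.codRestrict p h)) = finrank K (q.map f) := by
  rw [← finrank_map_subtype_eq, ← map_comp, LinearMap.subtype_comp_codRestrict]

theorem finrank_map_subtype_comp {K V W : Type*} [Field K] [AddCommGroup V] [Module K V]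
    [AddCommGroup W] [Module K W] (p : Submodule K V) (e : W ≃ₗ[K] p) (q : Submodule K W) :
    finrank K (q.map (p.subtype ∘ₗ e.toLinearMap)) = finrank K q := by
  rw [map_comp, finrank_map_subtype_eq, e.finrank_map_eq]

theorem finrank_sup_of_disjoint {K V : Type*} [Field K] [AddCommGroup V] [Module K V]
    {s t : Submodule K V} [FiniteDimensional K s] [FiniteDimensional K t] (h : Disjoint s t) :
    finrank K ↥(s ⊔ t) = finrank K s + finrank K t := by
  have := finrank_sup_add_finrank_inf_eq s t
  rwa [h.eq_bot, finrank_bot, add_zero] at this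

theorem finrank_sup_eq_add_finrank_map_of_ker_eq {K V W : Type*} [Field K] [AddCommGroup V]
    [Module K V] [AddCommGroup W] [Module K W] [FiniteDimensional K V] {f : V →ₗ[K] W}
    {P : Submodule K V} (hf : LinearMap.ker f = P) (Q : Submodule K V) :
    finrank K ↥(P ⊔ Q) = finrank K P + finrank K (Q.map f) := by
  have h := (f.domRestrict (P ⊔ Q)).finrank_range_add_finrank_ker
  rw [LinearMap.range_domRestrict, map_sup, LinearMap.le_ker_iff_map.mp hf.ge, bot_sup_eq,
    LinearMap.ker_domRestrict, hf, (comapSubtypeEquivOfLe le_sup_left).finrank_eq] at h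
  omega

theorem finrank_sup_eq_add_finrank_map_orthogonalProjection {𝕜 E : Type*} [RCLike 𝕜]
    [NormedAddCommGroup E] [InnerProductSpace 𝕜 E] [FiniteDimensional 𝕜 E]
    (P Q : Submodule 𝕜 E) :
    finrank 𝕜 ↥(P ⊔ Q) = finrank 𝕜 P + finrank 𝕜 (Q.map Pᗮ.orthogonalProjectionOnto.toLinearMap) :=
  finrank_sup_eq_add_finrank_map_of_ker_eq
    ((ker_orthogonalProjectionOnto (K := Pᗮ)).trans (Submodule.orthogonal_orthogonal P)) Q

theorem map_piMap_pi {R ι : Type*} [Semiring R] {M N : ι → Type*}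
    [∀ i, AddCommMonoid (M i)] [∀ i, Module R (M i)] [∀ i, AddCommMonoid (N i)]
    [∀ i, Module R (N i)] (f : ∀ i, M i →ₗ[R] N i) (V : ∀ i, Submodule R (M i)) :
    (pi Set.univ V).map (LinearMap.piMap f) = pi Set.univ fun i => (V i).map (f i) := by
  ext x
  simp only [mem_map, mem_pi, Set.mem_univ, forall_true_left]
  constructor
  · rintro ⟨v, hv, rfl⟩ i
    exact ⟨v i, hv i, rfl⟩
  · intro h
    choose v hv hfv using h
    exact ⟨v, hv, funext hfv⟩

theorem pi_univ_sup {R ι : Type*} [Semiring R] {M : ι → Type*}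
    [∀ i, AddCommMonoid (M i)] [∀ i, Module R (M i)] (U W : ∀ i, Submodule R (M i)) :
    pi Set.univ (fun i => U i ⊔ W i) = pi Set.univ U ⊔ pi Set.univ W := by
  refine le_antisymm (fun x hx => ?_) (sup_le (pi_mono fun i _ => le_sup_left)
    (pi_mono fun i _ => le_sup_right))
  choose u hu w hw huw using fun i => mem_sup.mp (hx i trivial)
  exact mem_sup.mpr ⟨u, fun i _ => hu i, w, fun i _ => hw i, funext huw⟩

end Submodule

namespace BLEPI

theorem finrank_orthogonal_eq_sub {n : ℕ} (K : Submodule ℝ (EuclideanSpace ℝ (Fin n))) :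
    (finrank ℝ Kᗮ : ℝ) = n - finrank ℝ K := by
  have h := K.finrank_add_finrank_orthogonal
  rw [finrank_euclideanSpace_fin] at h
  have h' : (finrank ℝ K : ℝ) + finrank ℝ Kᗮ = n := by exact_mod_cast h
  linarith

variable (D : Datum) (U : ∀ i, Submodule ℝ (EuclideanSpace ℝ (Fin (D.r i))))

theorem embedMap_eq_piMap (φ : ∀ i, EuclideanSpace ℝ (Fin (finrank ℝ (U i))) ≃ₗᵢ[ℝ] U i) :
    embedMap D U φ = LinearMap.piMap fun i => (U i).subtype ∘ₗ (φ i).toLinearMap :=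
  rfl

theorem embedMapPerp_eq_piMap
    (φ' : ∀ i, EuclideanSpace ℝ (Fin (finrank ℝ ((U i)ᗮ))) ≃ₗᵢ[ℝ] (U i)ᗮ) :
    embedMapPerp D U φ' = LinearMap.piMap fun i => (U i)ᗮ.subtype ∘ₗ (φ' i).toLinearMap :=
  rfl

theorem finrank_map_inducedU_A
    (φ : ∀ i, EuclideanSpace ℝ (Fin (finrank ℝ (U i))) ≃ₗᵢ[ℝ] U i)
    (ψ : ∀ j, EuclideanSpace ℝ (Fin (finrank ℝ (AjU D U j))) ≃ₗᵢ[ℝ] AjU D U j)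
    (V : ∀ i, Submodule ℝ (EuclideanSpace ℝ (Fin (finrank ℝ (U i))))) (j : Fin D.m) :
    finrank ℝ ((Submodule.pi Set.univ V).map ((inducedU D U φ ψ).A j)) =
      finrank ℝ ((Submodule.pi Set.univ fun i =>
        (V i).map ((U i).subtype ∘ₗ (φ i).toLinearMap)).map (D.A j)) := by
  change finrank ℝ ((Submodule.pi Set.univ V).map ((ψ j).symm.toLinearEquiv.toLinearMap ∘ₗ
    LinearMap.codRestrict (AjU D U j) (D.A j ∘ₗ embedMap D U φ)
      (fun v => Submodule.mem_map_of_mem (embedMap_mem D U φ v)))) = _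
  rw [Submodule.map_comp, Submodule.finrank_map_of_injective (ψ j).symm.injective]
  refine (Submodule.finrank_map_codRestrict _ _ _ _).trans ?_
  rw [Submodule.map_comp, embedMap_eq_piMap, Submodule.map_piMap_pi]

theorem finrank_map_inducedUperp_A
    (φ' : ∀ i, EuclideanSpace ℝ (Fin (finrank ℝ ((U i)ᗮ))) ≃ₗᵢ[ℝ] (U i)ᗮ)
    (ψ' : ∀ j, EuclideanSpace ℝ (Fin (finrank ℝ ((AjU D U j)ᗮ))) ≃ₗᵢ[ℝ] (AjU D U j)ᗮ)
    (V : ∀ i, Submodule ℝ (EuclideanSpace ℝ (Fin (finrank ℝ ((U i)ᗮ))))) (j : Fin D.m) :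
    finrank ℝ ((Submodule.pi Set.univ V).map ((inducedUperp D U φ' ψ').A j)) =
      finrank ℝ (((Submodule.pi Set.univ fun i =>
        (V i).map ((U i)ᗮ.subtype ∘ₗ (φ' i).toLinearMap)).map (D.A j)).map
          (AjU D U j)ᗮ.orthogonalProjectionOnto.toLinearMap) := by
  change finrank ℝ ((Submodule.pi Set.univ V).map ((ψ' j).symm.toLinearEquiv.toLinearMap ∘ₗ
    (AjU D U j)ᗮ.orthogonalProjectionOnto.toLinearMap ∘ₗ D.A j ∘ₗ embedMapPerp D U φ')) = _
  rw [Submodule.map_comp, Submodule.finrank_map_of_injective (ψ' j).symm.injective,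
    Submodule.map_comp, Submodule.map_comp, embedMapPerp_eq_piMap, Submodule.map_piMap_pi]

theorem cond1_inducedU (hc1 : Cond1 D)
    (φ : ∀ i, EuclideanSpace ℝ (Fin (finrank ℝ (U i))) ≃ₗᵢ[ℝ] U i)
    (ψ : ∀ j, EuclideanSpace ℝ (Fin (finrank ℝ (AjU D U j))) ≃ₗᵢ[ℝ] AjU D U j) :
    Cond1 (inducedU D U φ ψ) := by
  intro (V : ∀ i, Submodule ℝ (EuclideanSpace ℝ (Fin (finrank ℝ (U i)))))
  show ∑ i, D.d i * (finrank ℝ (V i) : ℝ) ≤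
    ∑ j, D.c j * (finrank ℝ ((Submodule.pi Set.univ V).map ((inducedU D U φ ψ).A j)) : ℝ)
  have := hc1 fun i => (V i).map ((U i).subtype ∘ₗ (φ i).toLinearMap)
  simpa only [Submodule.finrank_map_subtype_comp, finrank_map_inducedU_A] using this

theorem cond1_inducedUperp (hc1 : Cond1 D)
    (hcrit : ∑ i, D.d i * (finrank ℝ (U i) : ℝ) = ∑ j, D.c j * (finrank ℝ (AjU D U j) : ℝ))
    (φ' : ∀ i, EuclideanSpace ℝ (Fin (finrank ℝ ((U i)ᗮ))) ≃ₗᵢ[ℝ] (U i)ᗮ)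
    (ψ' : ∀ j, EuclideanSpace ℝ (Fin (finrank ℝ ((AjU D U j)ᗮ))) ≃ₗᵢ[ℝ] (AjU D U j)ᗮ) :
    Cond1 (inducedUperp D U φ' ψ') := by
  intro (V : ∀ i, Submodule ℝ (EuclideanSpace ℝ (Fin (finrank ℝ (U i)ᗮ))))
  show ∑ i, D.d i * (finrank ℝ (V i) : ℝ) ≤
    ∑ j, D.c j * (finrank ℝ ((Submodule.pi Set.univ V).map ((inducedUperp D U φ' ψ').A j)) : ℝ)
  set W := fun i : Fin D.k => (V i).map ((U i)ᗮ.subtype ∘ₗ (φ' i).toLinearMap)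
  have hdom : ∀ i, finrank ℝ ↥(U i ⊔ W i) = finrank ℝ (U i) + finrank ℝ (V i) := fun i => by
    have hW : W i ≤ (U i)ᗮ := by
      rintro _ ⟨y, -, rfl⟩
      exact (φ' i y).2
    rw [Submodule.finrank_sup_of_disjoint ((Submodule.orthogonal_disjoint (U i)).mono_right hW),
      Submodule.finrank_map_subtype_comp]
  have hcod : ∀ j, finrank ℝ ((Submodule.pi Set.univ fun i => U i ⊔ W i).map (D.A j)) =
      finrank ℝ (AjU D U j) +
        finrank ℝ ((Submodule.pi Set.univ V).map ((inducedUperp D U φ' ψ').A j)) := fun j => by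
    rw [finrank_map_inducedUperp_A, Submodule.pi_univ_sup, Submodule.map_sup,
      Submodule.finrank_sup_eq_add_finrank_map_orthogonalProjection]
    rfl
  have := hc1 fun i => U i ⊔ W i
  simp only [hdom, hcod, Nat.cast_add, mul_add, Finset.sum_add_distrib] at this
  linarith

theorem cond2_inducedUperp (hc2 : Cond2 D)
    (hcrit : ∑ i, D.d i * (finrank ℝ (U i) : ℝ) = ∑ j, D.c j * (finrank ℝ (AjU D U j) : ℝ))
    (φ' : ∀ i, EuclideanSpace ℝ (Fin (finrank ℝ ((U i)ᗮ))) ≃ₗᵢ[ℝ] (U i)ᗮ)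
    (ψ' : ∀ j, EuclideanSpace ℝ (Fin (finrank ℝ ((AjU D U j)ᗮ))) ≃ₗᵢ[ℝ] (AjU D U j)ᗮ) :
    Cond2 (inducedUperp D U φ' ψ') := by
  change ∑ i, D.d i * (finrank ℝ (U i)ᗮ : ℝ) = ∑ j, D.c j * (finrank ℝ (AjU D U j)ᗮ : ℝ)
  simp only [finrank_orthogonal_eq_sub, mul_sub, Finset.sum_sub_distrib]
  rw [hc2, hcrit]

theorem critical_splitting_preserves_conditions_general (D : Datum)
    (hc1 : Cond1 D) (hc2 : Cond2 D)
    (U : ∀ i, Submodule ℝ (EuclideanSpace ℝ (Fin (D.r i))))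
    (hcrit : ∑ i, D.d i * (finrank ℝ (U i) : ℝ) = ∑ j, D.c j * (finrank ℝ (AjU D U j) : ℝ))
    (φ : ∀ i, EuclideanSpace ℝ (Fin (finrank ℝ (U i))) ≃ₗᵢ[ℝ] U i)
    (ψ : ∀ j, EuclideanSpace ℝ (Fin (finrank ℝ (AjU D U j))) ≃ₗᵢ[ℝ] AjU D U j)
    (φ' : ∀ i, EuclideanSpace ℝ (Fin (finrank ℝ ((U i)ᗮ))) ≃ₗᵢ[ℝ] (U i)ᗮ)
    (ψ' : ∀ j, EuclideanSpace ℝ (Fin (finrank ℝ ((AjU D U j)ᗮ))) ≃ₗᵢ[ℝ] (AjU D U j)ᗮ) :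
    (Cond1 (inducedU D U φ ψ) ∧ Cond2 (inducedU D U φ ψ)) ∧
    (Cond1 (inducedUperp D U φ' ψ') ∧ Cond2 (inducedUperp D U φ' ψ')) :=
  ⟨⟨cond1_inducedU D U hc1 φ ψ, hcrit⟩,
    cond1_inducedUperp D U hc1 hcrit φ' ψ', cond2_inducedUperp D U hc2 hcrit φ' ψ'⟩

/-- **Preservation of the finiteness conditions under critical splitting** (Lemma 5.4):
if the BL-EPI datum satisfies conditions (i) and (ii) and `U` is an `r`-product form
critical subspace, then both induced BL-EPI data (on `U` and on `U^⊥`) also satisfy the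
corresponding conditions (i) and (ii). -/
theorem critical_splitting_preserves_conditions (D : Datum) (hD : D.Valid)
    (hc1 : Cond1 D) (hc2 : Cond2 D)
    (U : ∀ i, Submodule ℝ (EuclideanSpace ℝ (Fin (D.r i))))
    (hcrit : ∑ i, D.d i * (finrank ℝ (U i) : ℝ) = ∑ j, D.c j * (finrank ℝ (AjU D U j) : ℝ))
    (φ : ∀ i, EuclideanSpace ℝ (Fin (finrank ℝ (U i))) ≃ₗᵢ[ℝ] U i)
    (ψ : ∀ j, EuclideanSpace ℝ (Fin (finrank ℝ (AjU D U j))) ≃ₗᵢ[ℝ] AjU D U j)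
    (φ' : ∀ i, EuclideanSpace ℝ (Fin (finrank ℝ ((U i)ᗮ))) ≃ₗᵢ[ℝ] (U i)ᗮ)
    (ψ' : ∀ j, EuclideanSpace ℝ (Fin (finrank ℝ ((AjU D U j)ᗮ))) ≃ₗᵢ[ℝ] (AjU D U j)ᗮ) :
    (Cond1 (inducedU D U φ ψ) ∧ Cond2 (inducedU D U φ ψ)) ∧
    (Cond1 (inducedUperp D U φ' ψ') ∧ Cond2 (inducedUperp D U φ' ψ')) :=
  critical_splitting_preserves_conditions_general D hc1 hc2 U hcrit φ ψ φ' ψ'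

end BLEPI
end
end
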